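/- arXiv:1401.7194 — 2 statements merged into one kernel-verified Lean document; each statement's English description precedes it below -/
import Mathlib

section
/- The formal power series F(x) = \sum_{k=0}^{∞} C_k^{(d)} x^{k(d-1)+1} over ℚ satisfies the functional equation F(x) = F(x)^d + x, where d ≥ 2 and C_k^{(d)} = (1/(k(d-1)+1)) * binomial(dk,k) are the Fuss–Catalan numbers. -/
open PowerSeries

/-- The Fuss–Catalan number `C_k^{(d)} = (1/(k(d-1)+1)) * binomial (d*k) k`. -/
def fussCatalan (d k : ℕ) : ℕ := (d * k).choose k / (k * (d - 1) + 1)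

/-- The power series `F = ∑_{k≥0} C_k^{(d)} X^{k(d-1)+1}` over `ℚ`. -/
noncomputable def fussCatalanSeries (d : ℕ) : PowerSeries ℚ :=
  PowerSeries.mk fun m =>
    if m ≠ 0 ∧ (d - 1) ∣ (m - 1) then (fussCatalan d ((m - 1) / (d - 1)) : ℚ) else 0

/-!
Let `A = ∑ₖ C_k^{(d)} Xᵏ`. The coefficients of `A ^ j` are the Raney numbers
`R(j, K) = j/(dK+j) * C(dK+j, K)`: given `A_{K+1} = R(d, K)`, expanding `A ^ (j+1) = A ^ j * A`
yields the Pascal-type recurrence `R(j+1, K+1) = R(j, K+1) + R(j+d, K)`, so strong induction on `K`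
identifies the two. Hence `A_{K+1} = [Xᴷ] A ^ d`, i.e. `A = 1 + X A ^ d`, and since
`F(X) = X A(X^{d-1})`, substituting `X^{d-1}` and multiplying by `X` gives `F = X + F ^ d`.
-/

/-- The Raney number `R(j, K) = j/(dK+j) * C(dK+j, K)`, written without division as
`C(dK+j, K) - d * C(dK+j-1, K-1)`, which turns the recurrence into Pascal's rule. -/
def raney (d j : ℕ) : ℕ → ℤ
  | 0 => 1
  | K + 1 => ((d * (K + 1) + j).choose (K + 1) : ℤ) - d * (d * (K + 1) + j - 1).choose K

theorem raney_succ_of_eq {d j K n : ℕ} (h : d * (K + 1) + j = n + 1) :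
    raney d j (K + 1) = ((n + 1).choose (K + 1) : ℤ) - d * n.choose K := by
  simp [raney, h]

theorem raney_zero_succ {d : ℕ} (hd : 0 < d) (K : ℕ) : raney d 0 (K + 1) = 0 := by
  obtain ⟨n, hn⟩ := Nat.exists_eq_add_one.mpr (by positivity : 0 < d * (K + 1) + 0)
  have hn' : (n : ℤ) + 1 = d * (K + 1) := by exact_mod_cast hn.symm
  have h : ((n : ℤ) + 1) * n.choose K = (n + 1).choose (K + 1) * (K + 1) := by
    exact_mod_cast Nat.add_one_mul_choose_eq n K
  rw [raney_succ_of_eq hn]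
  apply mul_right_cancel₀ (by positivity : (K : ℤ) + 1 ≠ 0)
  linear_combination -h + (n.choose K : ℤ) * hn'

theorem raney_succ_succ {d : ℕ} (hd : 0 < d) (j K : ℕ) :
    raney d (j + 1) (K + 1) = raney d j (K + 1) + raney d (j + d) K := by
  obtain ⟨n, hn⟩ := Nat.exists_eq_add_one.mpr (by positivity : 0 < d * (K + 1) + j)
  rw [raney_succ_of_eq (n := n + 1) (by omega), raney_succ_of_eq hn]
  rcases K with _ | K
  · simp only [raney, zero_add, Nat.choose_one_right, Nat.choose_zero_right]
    push_cast
    ring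
  · rw [raney_succ_of_eq (n := n) (by linarith), Nat.choose_succ_succ (n + 1),
      Nat.choose_succ_succ n]
    push_cast
    ring

theorem fussCatalan_eq_raney_one {d : ℕ} (hd : 0 < d) (k : ℕ) :
    (fussCatalan d k : ℤ) = raney d 1 k := by
  rcases k with _ | K
  · simp [fussCatalan, raney]
  obtain ⟨e, rfl⟩ : ∃ e, d = e + 1 := ⟨d - 1, by omega⟩
  set n := (e + 1) * (K + 1)
  have h : n.choose (K + 1) * (K + 1) = n.choose K * ((K + 1) * e + 1) := by
    rw [Nat.choose_succ_right_eq]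
    congr 1
    rw [Nat.sub_eq_iff_eq_add (by simp only [n]; nlinarith)]
    ring
  have key : (((K + 1) * e + 1 : ℕ) : ℤ) * raney (e + 1) 1 (K + 1) = n.choose (K + 1) := by
    rw [raney_succ_of_eq (n := n) rfl, Nat.choose_succ_succ]
    have hq : (n.choose (K + 1) : ℤ) * (K + 1) = n.choose K * ((K + 1) * e + 1) := by
      exact_mod_cast h
    push_cast
    linear_combination (e : ℤ) * hq
  rw [fussCatalan, Nat.add_sub_cancel, Int.natCast_div, ← key,
    Int.mul_ediv_cancel_left _ (by positivity)]

theorem raney_one_succ {d : ℕ} (hd : 0 < d) (K : ℕ) : raney d 1 (K + 1) = raney d d K := by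
  rw [raney_succ_succ hd 0 K, raney_zero_succ hd, zero_add, zero_add]

section RaneySeries

open Finset

variable (R : Type*) [CommRing R]

noncomputable def raneySeries (d j : ℕ) : R⟦X⟧ :=
  mk fun K => (raney d j K : R)

variable {R}

theorem coeff_raneySeries (d j K : ℕ) : coeff K (raneySeries R d j) = raney d j K :=
  coeff_mk _ _

theorem raneySeries_one_pow {d : ℕ} (hd : 0 < d) (j : ℕ) :
    raneySeries R d 1 ^ j = raneySeries R d j := by
  set A := raneySeries R d 1
  ext K
  induction K using Nat.strong_induction_on generalizing j with
  | _ K ih =>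
  simp only [coeff_raneySeries] at ih ⊢
  induction j with
  | zero =>
    rcases K with _ | K
    · simp [raney]
    · simp [coeff_one, raney_zero_succ hd]
  | succ j ihj =>
    rcases K with _ | K
    · simp [pow_succ, coeff_mul, ihj, A, coeff_raneySeries, raney]
    have hA : ∀ p ∈ antidiagonal K, coeff (p.2 + 1) A = coeff p.2 (A ^ d) := by
      intro p hp
      rw [ih p.2 (Nat.antidiagonal.snd_lt hp), coeff_raneySeries, raney_one_succ hd]
    calc coeff (K + 1) (A ^ (j + 1))
        = coeff (K + 1) (A ^ j) * coeff 0 A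
          + ∑ p ∈ antidiagonal K, coeff p.1 (A ^ j) * coeff (p.2 + 1) A := by
          rw [pow_succ, coeff_mul, Finset.Nat.sum_antidiagonal_succ']
      _ = raney d j (K + 1) + coeff K (A ^ j * A ^ d) := by
          rw [ihj, coeff_mul, sum_congr rfl fun p hp => by rw [hA p hp]]
          simp [A, coeff_raneySeries, raney]
      _ = raney d (j + 1) (K + 1) := by
          rw [← pow_add, ih K K.lt_succ_self, raney_succ_succ hd]
          push_cast
          ring

theorem raneySeries_one_eq_one_add_X_mul_pow {d : ℕ} (hd : 0 < d) :
    raneySeries R d 1 = 1 + X * raneySeries R d 1 ^ d := by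
  ext (_ | K)
  · simp [coeff_raneySeries, raney]
  · rw [map_add, coeff_succ_X_mul, raneySeries_one_pow hd, coeff_raneySeries, coeff_raneySeries,
      raney_one_succ hd]
    simp

end RaneySeries

theorem fussCatalanSeries_eq_X_mul_expand {d : ℕ} (hd : 2 ≤ d) :
    fussCatalanSeries d = X * expand (d - 1) (by omega) (raneySeries ℚ d 1) := by
  ext (_ | m)
  · simp [fussCatalanSeries]
  · rw [coeff_succ_X_mul, coeff_expand, fussCatalanSeries, coeff_mk, coeff_raneySeries]
    simp [← fussCatalan_eq_raney_one (by omega : 0 < d)]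

/-- The series `F = ∑_{k≥0} C_k^{(d)} X^{k(d-1)+1}` satisfies `F = F^d + X`. -/
theorem fussCatalanSeries_functional_equation (d : ℕ) (hd : 2 ≤ d) :
    fussCatalanSeries d = (fussCatalanSeries d) ^ d + X := by
  have he : d - 1 ≠ 0 := by omega
  have hX : (X : ℚ⟦X⟧) * X ^ (d - 1) = X ^ d := by
    rw [← pow_succ', Nat.sub_add_cancel (by omega)]
  set E := expand (d - 1) he (raneySeries ℚ d 1)
  have hE : E = 1 + X ^ (d - 1) * E ^ d := by
    have h := congrArg (expand (d - 1) he)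
      (raneySeries_one_eq_one_add_X_mul_pow (R := ℚ) (d := d) (by omega))
    rwa [map_add, map_one, map_mul, expand_X, map_pow] at h
  rw [fussCatalanSeries_eq_X_mul_expand hd]
  calc X * E = X * (1 + X ^ (d - 1) * E ^ d) := by rw [← hE]
    _ = (X * E) ^ d + X := by rw [mul_pow, ← hX]; ring
end

section
/- Colored version: let 2 ≤ d_1 < ... < d_r and let b_{d_1},...,b_{d_r} be positive integers. Let z = \sum_{n≥0} a_n x^{n+1} be the compositional inverse of x = z - \sum_{i=1}^{r} b_{d_i} z^{d_i}. Then a_n = \sum_{λ} (1/(n+1)) * binomial(n+k, k) * multinomial(k; k_{d_1-1},...,k_{d_r-1}) * \prod_{i=1}^{r} b_{d_i}^{k_{d_i-1}}, summed over all tuples with \sum_i (d_i-1) k_{d_i-1} = n and k = \sum_i k_{d_i-1}. In particular each a_n is a positive integer. -/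
/-!
Write `g = 1 - ∑ b_i z^{d_i - 1}` and `φ = g⁻¹`, so that `F = coeffSeries a` is the compositional
inverse of `f = X * g = X / φ`. Lagrange inversion gives `(n + 1) a_n = [z^n] φ^{n+1}`: differentiating
`F(f(z)) = z` gives `F'(f) f' = 1`, and after multiplying by `φ^{n+1}` the coefficient of `z^n` of
`f^m f' φ^{n+1} = z^m f' φ^{n+1-m}` is the formal residue of `f' / f^{n+1-m}`, which is `δ_{m,n}`.
Expanding `φ^{n+1} = ∑_k C(n+k, k) B^k` with `B = 1 - g`, and `B^k` by the multinomial theorem,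
gives the formula.

Integrality is independent of the formula: comparing coefficients of `x^{n+1}` in
`F = x + ∑ b_i F^{d_i}` expresses `a_n` as a polynomial with natural coefficients in
`a_0, …, a_{n-1}`, because `d_i ≥ 2`.
-/

open PowerSeries

/-- The series `z = ∑_{n≥0} a_n x^{n+1}`. -/
noncomputable def coeffSeries (a : ℕ → ℚ) : PowerSeries ℚ :=
  PowerSeries.mk fun m => if m = 0 then 0 else a (m - 1)

namespace Finset

theorem sum_filter_weight_eq_sum_range_sum_piAntidiag {ι M : Type*} [Fintype ι] [DecidableEq ι]
    [AddCommMonoid M] {e : ι → ℕ} (he : ∀ i, 1 ≤ e i) (n : ℕ) (g : (ι → ℕ) → M) :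
    ∑ v ∈ Fintype.piFinset (fun _ ↦ range (n + 1)) with ∑ i, e i * v i = n, g v =
      ∑ k ∈ range (n + 1), ∑ v ∈ piAntidiag univ k with ∑ i, e i * v i = n, g v := by
  have hle : ∀ v : ι → ℕ, ∑ i, v i ≤ ∑ i, e i * v i := fun v ↦
    sum_le_sum fun i _ ↦ Nat.le_mul_of_pos_left _ (he i)
  rw [← sum_fiberwise_of_maps_to (g := fun v ↦ ∑ i, v i) (t := range (n + 1))]
  · refine sum_congr rfl fun k _ ↦ sum_congr ?_ fun _ _ ↦ rfl
    ext v
    simp only [mem_filter, Fintype.mem_piFinset, mem_range, mem_piAntidiag, mem_univ,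
      implies_true, and_true, Nat.lt_succ_iff]
    constructor
    · rintro ⟨⟨-, hn⟩, hk⟩
      exact ⟨hk, hn⟩
    · rintro ⟨hk, hn⟩
      exact ⟨⟨fun i ↦ (single_le_sum (fun j _ ↦ Nat.zero_le (v j)) (mem_univ i)).trans
        (hn ▸ hle v), hn⟩, hk⟩
  · intro v hv
    exact mem_range.mpr (Nat.lt_succ_of_le ((mem_filter.mp hv).2 ▸ hle v))

end Finset

namespace PowerSeries

open Finset

variable {R : Type*} [CommRing R]

theorem subst_eq_X_of_subst_eq_X {P F : R⟦X⟧} (hP : constantCoeff P = 0)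
    (hP₁ : IsUnit (coeff 1 P)) (hF : constantCoeff F = 0) (h : P.subst F = X) :
    F.subst P = X := by
  have hF' : HasSubst F := HasSubst.of_constantCoeff_zero' hF
  have hF_eq : F = P.substInvOfIsUnit hP₁ := calc
    F = PowerSeries.subst F (PowerSeries.subst P (P.substInvOfIsUnit hP₁)) := by
      rw [subst_substInvOfIsUnit_left P hP hP₁, subst_X hF']
    _ = P.substInvOfIsUnit hP₁ := by
      rw [subst_comp_subst_apply (HasSubst.of_constantCoeff_zero' hP) hF', h, X_subst]
  rw [hF_eq, subst_substInvOfIsUnit_left P hP hP₁]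

theorem coeff_subst_mul {f : R⟦X⟧} (hf : constantCoeff f = 0) (p h : R⟦X⟧) (n : ℕ) :
    coeff n (p.subst f * h) = ∑ m ∈ range (n + 1), coeff m p * coeff n (f ^ m * h) := by
  have hf' := HasSubst.of_constantCoeff_zero' hf
  obtain ⟨q, hq⟩ : X ^ (n + 1) ∣ p - (trunc (n + 1) p : R⟦X⟧) := by
    rw [X_pow_dvd_iff]
    intro m hm
    simp [Polynomial.coeff_coe, coeff_trunc, hm]
  have hp : p.subst f =
      ∑ m ∈ range (n + 1), C (coeff m p) * f ^ m + f ^ (n + 1) * q.subst f := by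
    conv_lhs => rw [eq_add_of_sub_eq' hq]
    rw [subst_add hf', subst_mul hf', subst_pow hf', subst_X hf', subst_coe hf',
      Polynomial.aeval_def, eval₂_trunc_eq_sum_range]
    rfl
  have htail : coeff n (f ^ (n + 1) * q.subst f * h) = 0 := by
    obtain ⟨f₀, rfl⟩ := X_dvd_iff.mpr hf
    rw [mul_pow, mul_assoc, mul_assoc, coeff_X_pow_mul', if_neg (by omega)]
  rw [hp, add_mul, map_add, htail, add_zero, sum_mul, map_sum]
  simp_rw [mul_assoc, coeff_C_mul]

section TorsionFree

variable [IsAddTorsionFree R]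

theorem coeff_derivative_X_mul_mul_pow {g φ : R⟦X⟧} (hφ : φ * g = 1) (j : ℕ) :
    coeff j (d⁄dX R (X * g) * φ ^ (j + 1)) = if j = 0 then 1 else 0 := by
  have hexpand : d⁄dX R (X * g) * φ ^ (j + 1) = φ ^ j + X * (d⁄dX R g * φ ^ (j + 1)) := by
    rw [Derivation.leibniz, derivative_X, smul_eq_mul, smul_eq_mul]
    linear_combination φ ^ j * hφ
  cases j with
  | zero => rw [hexpand]; simp
  | succ k =>
    have hdφ : d⁄dX R φ = -(d⁄dX R g * φ ^ 2) := by
      have hD := congrArg (d⁄dX R) hφ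
      rw [Derivation.leibniz, derivative_one, smul_eq_mul, smul_eq_mul] at hD
      linear_combination (-d⁄dX R φ) * hφ + φ * hD
    -- `(k + 1) [X^k] φ^k φ' = [X^k] (φ^(k+1))' = (k + 1) [X^(k+1)] φ^(k+1)`
    have hcoeff : coeff k (d⁄dX R g * φ ^ (k + 2)) = -coeff (k + 1) (φ ^ (k + 1)) := by
      apply IsAddTorsionFree.nsmul_right_injective k.succ_ne_zero
      calc (k + 1) • coeff k (d⁄dX R g * φ ^ (k + 2)) = -coeff k (d⁄dX R (φ ^ (k + 1))) := by
            rw [Derivation.leibniz_pow, hdφ, Nat.add_sub_cancel, smul_eq_mul, map_nsmul,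
              ← smul_neg, ← map_neg, neg_mul_eq_mul_neg, neg_neg]
            congr 2
            ring
        _ = (k + 1) • -coeff (k + 1) (φ ^ (k + 1)) := by
            rw [coeff_derivative, smul_neg, nsmul_eq_mul, mul_comm]
            push_cast
            ring
    rw [hexpand, map_add, coeff_succ_X_mul, hcoeff, add_neg_cancel, if_neg k.succ_ne_zero]

theorem coeff_X_mul_pow_mul_derivative_mul_pow {g φ : R⟦X⟧} (hφ : φ * g = 1) (m j : ℕ) :
    coeff (m + j) ((X * g) ^ m * (d⁄dX R (X * g) * φ ^ (m + j + 1))) =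
      if j = 0 then 1 else 0 := by
  have hsplit : (X * g) ^ m * (d⁄dX R (X * g) * φ ^ (m + j + 1)) =
      X ^ m * (d⁄dX R (X * g) * φ ^ (j + 1)) := calc
    _ = X ^ m * (φ * g) ^ m * (d⁄dX R (X * g) * φ ^ (j + 1)) := by ring
    _ = X ^ m * (d⁄dX R (X * g) * φ ^ (j + 1)) := by rw [hφ, one_pow, mul_one]
  rw [hsplit, add_comm, coeff_X_pow_mul, coeff_derivative_X_mul_mul_pow hφ]

theorem lagrange_inversion {g φ F : R⟦X⟧} (hφ : φ * g = 1) (hF : constantCoeff F = 0)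
    (hFg : (X * g).subst F = X) (n : ℕ) :
    (n + 1) * coeff (n + 1) F = coeff n (φ ^ (n + 1)) := by
  have hf : constantCoeff (X * g) = 0 := by simp
  have hf₁ : IsUnit (coeff 1 (X * g)) := by
    rw [← zero_add 1, coeff_succ_X_mul, coeff_zero_eq_constantCoeff_apply]
    exact IsUnit.of_mul_eq_one_right _ (by rw [← map_mul, hφ, map_one])
  have hchain : (d⁄dX R F).subst (X * g) * d⁄dX R (X * g) = 1 := by
    rw [← derivative_subst (HasSubst.of_constantCoeff_zero' hf),
      subst_eq_X_of_subst_eq_X hf hf₁ hF hFg, derivative_X]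
  have hterm : ∀ m ∈ range (n + 1),
      coeff m (d⁄dX R F) * coeff n ((X * g) ^ m * (d⁄dX R (X * g) * φ ^ (n + 1))) =
        if m = n then coeff n (d⁄dX R F) else 0 := by
    intro m hm
    obtain ⟨j, rfl⟩ := Nat.exists_eq_add_of_le (Nat.lt_succ_iff.mp (mem_range.mp hm))
    rw [coeff_X_mul_pow_mul_derivative_mul_pow hφ]
    by_cases hj : j = 0 <;> simp [hj]
  calc (n + 1) * coeff (n + 1) F = coeff n (d⁄dX R F) := by rw [coeff_derivative, mul_comm]
    _ = ∑ m ∈ range (n + 1),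
          coeff m (d⁄dX R F) * coeff n ((X * g) ^ m * (d⁄dX R (X * g) * φ ^ (n + 1))) := by
        rw [sum_congr rfl hterm, sum_ite_eq', if_pos (self_mem_range_succ n)]
    _ = coeff n (φ ^ (n + 1)) := by
        rw [← coeff_subst_mul hf, ← mul_assoc, hchain, one_mul]

end TorsionFree

theorem coeff_pow_succ_eq_sum_choose_mul_coeff_pow {φ B : R⟦X⟧} (hB : constantCoeff B = 0)
    (hφ : φ * (1 - B) = 1) (n : ℕ) :
    coeff n (φ ^ (n + 1)) = ∑ k ∈ range (n + 1), ((n + k).choose k : R) * coeff n (B ^ k) := by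
  have hB' := HasSubst.of_constantCoeff_zero' hB
  set M : R⟦X⟧ := mk fun k ↦ ((n + k).choose n : R)
  have hM : M.subst B * (1 - B) ^ (n + 1) = 1 := by
    have h := congrArg (substAlgHom (R := R) hB')
      (mk_add_choose_mul_one_sub_pow_eq_one (S := R) (d := n))
    rwa [map_mul, map_pow, map_sub, map_one, substAlgHom_X, coe_substAlgHom] at h
  have hφM : φ ^ (n + 1) = M.subst B := calc
    φ ^ (n + 1) = φ ^ (n + 1) * (M.subst B * (1 - B) ^ (n + 1)) := by rw [hM, mul_one]
    _ = M.subst B * (φ * (1 - B)) ^ (n + 1) := by rw [mul_pow]; ring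
    _ = M.subst B := by rw [hφ, one_pow, mul_one]
  rw [hφM, ← mul_one (M.subst B), coeff_subst_mul hB]
  refine sum_congr rfl fun k _ ↦ ?_
  rw [coeff_mk, mul_one, Nat.choose_symm_add]

theorem coeff_sum_C_mul_X_pow_pow {A ι : Type*} [CommSemiring A] [Fintype ι] [DecidableEq ι]
    (c : ι → A) (e : ι → ℕ) (n k : ℕ) :
    coeff n ((∑ i, C (c i) * X ^ e i) ^ k) =
      ∑ v ∈ piAntidiag univ k with ∑ i, e i * v i = n,
        (Nat.multinomial univ v : A) * ∏ i, c i ^ v i := by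
  rw [sum_pow_eq_sum_piAntidiag, map_sum, sum_filter]
  refine sum_congr rfl fun v _ ↦ ?_
  have hprod : ∏ i, (C (c i) * X ^ e i) ^ v i = C (∏ i, c i ^ v i) * X ^ (∑ i, e i * v i) := by
    simp only [mul_pow, prod_mul_distrib, map_prod, map_pow, ← pow_mul, prod_pow_eq_pow_sum]
  rw [hprod, ← map_natCast (C (R := A)), ← mul_assoc, ← map_mul, coeff_C_mul_X_pow]
  exact if_congr eq_comm rfl rfl

theorem coeff_pow_succ_of_mul_one_sub_sum_eq_one {ι : Type*} [Fintype ι] [DecidableEq ι]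
    {c : ι → R} {e : ι → ℕ} (he : ∀ i, 1 ≤ e i) {φ : R⟦X⟧}
    (hφ : φ * (1 - ∑ i, C (c i) * X ^ e i) = 1) (n : ℕ) :
    coeff n (φ ^ (n + 1)) =
      ∑ v ∈ Fintype.piFinset (fun _ ↦ range (n + 1)) with ∑ i, e i * v i = n,
        ((n + ∑ i, v i).choose (∑ i, v i) : R) * Nat.multinomial univ v * ∏ i, c i ^ v i := by
  have hB : constantCoeff (∑ i, C (c i) * X ^ e i) = 0 := by
    simp [map_sum, zero_pow (Nat.one_le_iff_ne_zero.mp (he _))]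
  rw [coeff_pow_succ_eq_sum_choose_mul_coeff_pow hB hφ,
    sum_filter_weight_eq_sum_range_sum_piAntidiag he]
  refine sum_congr rfl fun k _ ↦ ?_
  rw [coeff_sum_C_mul_X_pow_pow, mul_sum]
  refine sum_congr rfl fun v hv ↦ ?_
  rw [(mem_piAntidiag.mp (mem_filter.mp hv).1).1, mul_assoc]

theorem subst_X_mul_one_sub_sum {ι : Type*} [Fintype ι] {F : R⟦X⟧}
    (hF : constantCoeff F = 0) (c : ι → R) {d : ι → ℕ} (hd : ∀ i, 1 ≤ d i) :
    (X * (1 - ∑ i, C (c i) * X ^ (d i - 1))).subst F = F - ∑ i, c i • F ^ d i := by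
  have hX : X * (1 - ∑ i, C (c i) * X ^ (d i - 1)) = X - ∑ i, c i • (X : R⟦X⟧) ^ d i := by
    rw [mul_sub, mul_one, mul_sum]
    refine congrArg _ (sum_congr rfl fun i _ ↦ ?_)
    rw [smul_eq_C_mul, mul_left_comm, ← pow_succ', Nat.sub_add_cancel (hd i)]
  rw [hX, ← coe_substAlgHom (HasSubst.of_constantCoeff_zero' hF)]
  simp only [map_sub, map_sum, map_smul, map_pow, substAlgHom_X]

theorem coeff_pow_mem_of_coeff_mem {A : Type*} [CommSemiring A] (S : Subsemiring A)
    {G : A⟦X⟧} {m : ℕ} (hG : ∀ j ≤ m, coeff j G ∈ S) (k : ℕ) :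
    ∀ j ≤ m, coeff j (G ^ k) ∈ S := by
  induction k with
  | zero =>
    intro j _
    rw [pow_zero, coeff_one]
    split_ifs
    exacts [S.one_mem, S.zero_mem]
  | succ k ih =>
    intro j hj
    rw [pow_succ, coeff_mul]
    exact S.sum_mem fun p hp ↦
      S.mul_mem (ih _ ((HasAntidiagonal.antidiagonal.fst_le hp).trans hj))
        (hG _ ((HasAntidiagonal.antidiagonal.snd_le hp).trans hj))

theorem coeff_mem_of_X_mul_eq_X_add_sum {A ι : Type*} [CommSemiring A] [Fintype ι]
    (S : Subsemiring A) {c : ι → A} (hc : ∀ i, c i ∈ S) {d : ι → ℕ} (hd : ∀ i, 2 ≤ d i)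
    {G : A⟦X⟧} (hG : X * G = X + ∑ i, c i • (X * G) ^ d i) (n : ℕ) : coeff n G ∈ S := by
  induction n using Nat.strong_induction_on with
  | _ n ih =>
  rw [← coeff_succ_X_mul, hG, map_add, map_sum]
  refine S.add_mem ?_ (S.sum_mem fun i _ ↦ ?_)
  · rw [coeff_X]
    split_ifs
    exacts [S.one_mem, S.zero_mem]
  · rw [coeff_smul, mul_pow, coeff_X_pow_mul', smul_eq_mul]
    split_ifs
    · exact S.mul_mem (hc i) (coeff_pow_mem_of_coeff_mem S
        (fun j hj ↦ ih j (by have := hd i; omega)) _ _ le_rfl)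
    · rw [mul_zero]
      exact S.zero_mem

end PowerSeries

theorem coeffSeries_eq_X_mul_mk (a : ℕ → ℚ) : coeffSeries a = X * mk a := by
  ext (_ | n)
  · simp [coeffSeries]
  · rw [coeff_succ_X_mul, coeffSeries, coeff_mk, coeff_mk, if_neg n.succ_ne_zero,
      Nat.add_sub_cancel]

theorem colored_reverse_series_counts_dissections_general (r : ℕ) (d : Fin r → ℕ)
    (hd2 : ∀ i, 2 ≤ d i)
    (b : Fin r → ℕ) (a : ℕ → ℚ)
    (hinv : coeffSeries a - ∑ i : Fin r, (b i : ℚ) • (coeffSeries a) ^ (d i) = X) :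
    ∀ n : ℕ,
      (a n = ∑ v ∈ (Fintype.piFinset fun _ : Fin r => Finset.range (n + 1)).filter
          (fun v => ∑ i, (d i - 1) * v i = n),
        (1 / ((n : ℚ) + 1)) * (((n + ∑ i, v i).choose (∑ i, v i) : ℕ) : ℚ) *
          ((Nat.multinomial Finset.univ v : ℕ) : ℚ) *
          ∏ i : Fin r, ((b i : ℚ)) ^ (v i)) ∧
      ∃ m : ℕ, a n = (m : ℚ) := by
  have hd1 : ∀ i, 1 ≤ d i - 1 := fun i ↦ by have := hd2 i; omega
  have hF0 : constantCoeff (coeffSeries a) = 0 := by simp [coeffSeries_eq_X_mul_mk]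
  set g : ℚ⟦X⟧ := 1 - ∑ i, C (b i : ℚ) * X ^ (d i - 1)
  have hφ : g⁻¹ * g = 1 := PowerSeries.inv_mul_cancel _ (by
    have h0 : ∀ i, (0 : ℚ) ^ (d i - 1) = 0 := fun i ↦ zero_pow (by have := hd1 i; omega)
    simp [g, map_sum, h0])
  intro n
  constructor
  · have hlag := lagrange_inversion hφ hF0
      (by rw [subst_X_mul_one_sub_sum hF0 _ (fun i ↦ (hd1 i).trans (Nat.sub_le _ _)), hinv]) n
    rw [coeff_pow_succ_of_mul_one_sub_sum_eq_one hd1 hφ, coeffSeries_eq_X_mul_mk,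
      coeff_succ_X_mul, coeff_mk] at hlag
    calc a n = 1 / (n + 1) * ((n + 1) * a n) := by field_simp
      _ = _ := by rw [hlag, Finset.mul_sum]; simp only [mul_assoc]
  · obtain ⟨m, hm⟩ := coeff_mem_of_X_mul_eq_X_add_sum (Nat.castRingHom ℚ).rangeS
      (c := fun i ↦ (b i : ℚ)) (fun i ↦ ⟨b i, rfl⟩) hd2
      (coeffSeries_eq_X_mul_mk a ▸ sub_eq_iff_eq_add.mp hinv) n
    exact ⟨m, by rw [coeff_mk] at hm; exact hm.symm⟩

/-- Colored polygonal partitions: let `2 ≤ d_1 < ⋯ < d_r`, let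
`b_{d_1},…,b_{d_r}` be positive integers, and let `z = ∑_{n≥0} a_n x^{n+1}` be
the compositional inverse of `x = z - ∑_i b_{d_i} z^{d_i}`
(i.e. `F - ∑_i b_{d_i} F^{d_i} = X`).  Then
`a_n = ∑_λ (1/(n+1)) C(n+k,k) ⬝ multinomial(k; k_{d_1-1},…,k_{d_r-1}) ⬝ ∏_i b_{d_i}^{k_{d_i-1}}`,
summed over tuples with `∑_i (d_i-1) k_{d_i-1} = n` and `k = ∑_i k_{d_i-1}`;
in particular each `a_n` is a (nonnegative) integer. -/
theorem colored_reverse_series_counts_dissections (r : ℕ) (d : Fin r → ℕ)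
    (hd2 : ∀ i, 2 ≤ d i) (hmono : StrictMono d)
    (b : Fin r → ℕ) (hb : ∀ i, 1 ≤ b i) (a : ℕ → ℚ)
    (hinv : coeffSeries a - ∑ i : Fin r, (b i : ℚ) • (coeffSeries a) ^ (d i) = X) :
    ∀ n : ℕ,
      (a n = ∑ v ∈ (Fintype.piFinset fun _ : Fin r => Finset.range (n + 1)).filter
          (fun v => ∑ i, (d i - 1) * v i = n),
        (1 / ((n : ℚ) + 1)) * (((n + ∑ i, v i).choose (∑ i, v i) : ℕ) : ℚ) *
          ((Nat.multinomial Finset.univ v : ℕ) : ℚ) *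
          ∏ i : Fin r, ((b i : ℚ)) ^ (v i)) ∧
      ∃ m : ℕ, a n = (m : ℚ) :=
  colored_reverse_series_counts_dissections_general r d hd2 b a hinv
end
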